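/- arXiv:1511.09168 — 6 statements merged into one kernel-verified Lean document; each statement's English description precedes it below -/
import Mathlib

section
/- For any x ∈ B(m), the cardinalities of the sets A_x and B_x are equal, where A_x = {(i,a,k) : i ∈ ℤ_L, a ∈ [1,n], 1 ≤ k ≤ (x^a_{i+1} - x^{a-1}_i)_+} and B_x = {(i,a,k) : i ∈ ℤ_L, a ∈ [1,n], 1 ≤ k ≤ (x^a_i - x^{a+1}_{i+1})_+}, with the convention x^0_i = x^{n+1}_i = 0. -/
/-!
Both cardinalities are sums of positive parts. Grouping the terms of `A_x` and `B_x` by the pair of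
adjacent rows `(x^j, x^{j+1})`, `j ∈ [0, n]`, that they compare, both become sums over `j ∈ [0, n]`
and `i ∈ ℤ_L` of `(d_{j,i})_+` and `(-d_{j,i})_+` respectively, where `d_{j,i} = x^{j+1}_{i+1} - x^j_i`;
the extra terms `j = n` in `A_x` and `j = 0` in `B_x` vanish because the rows are nonnegative and
`x^0 = x^{n+1} = 0`. The difference of the two sums is therefore `∑_j ∑_i d_{j,i}`, and since the
cyclic shift `i ↦ i + 1` permutes `ℤ_L` this telescopes to `∑_i x^{n+1}_i - ∑_i x^0_i = 0`.
-/

open Finset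

theorem ncard_setOf_le_max_zero {ι : Type*} [Fintype ι] (n : ℕ) (G : ι → ℕ → ℤ) :
    ({p : ι × ℕ × ℕ | 1 ≤ p.2.1 ∧ p.2.1 ≤ n ∧ 1 ≤ p.2.2 ∧
        (p.2.2 : ℤ) ≤ max (G p.1 p.2.1) 0}.ncard : ℤ)
      = ∑ i, ∑ a ∈ Icc 1 n, max (G i a) 0 := by
  classical
  let e : (Σ _ : ι × ℕ, ℕ) ≃ ι × ℕ × ℕ :=
    (Equiv.sigmaEquivProd _ _).trans (Equiv.prodAssoc _ _ _)
  have hset : {p : ι × ℕ × ℕ | 1 ≤ p.2.1 ∧ p.2.1 ≤ n ∧ 1 ≤ p.2.2 ∧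
      (p.2.2 : ℤ) ≤ max (G p.1 p.2.1) 0}
      = ↑(((univ ×ˢ Icc 1 n).sigma fun q => Icc 1 (G q.1 q.2).toNat).map e.toEmbedding) := by
    rw [coe_map, Equiv.coe_toEmbedding, e.image_eq_preimage_symm]
    ext ⟨i, a, k⟩
    simp [e]
    omega
  rw [hset, Set.ncard_coe_finset, card_map, card_sigma, sum_product]
  push_cast
  simp

theorem sum_Icc_one_eq_sum_range {M : Type*} [AddCommMonoid M] (n : ℕ) (g : ℕ → M) :
    ∑ a ∈ Icc 1 n, g a = ∑ j ∈ range n, g (j + 1) := by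
  rw [← Ico_add_one_right_eq_Icc, sum_Ico_eq_sum_range]
  simp [add_comm]

theorem sum_sum_max_sub_perm_eq {ι : Type*} [Fintype ι] (σ : Equiv.Perm ι) (n : ℕ)
    (x : ℕ → ι → ℕ) (h0 : ∀ i, x 0 i = 0) (htop : ∀ i, x (n + 1) i = 0) :
    ∑ i, ∑ a ∈ Icc 1 n, max ((x a (σ i) : ℤ) - x (a - 1) i) 0
      = ∑ i, ∑ a ∈ Icc 1 n, max ((x a i : ℤ) - x (a + 1) (σ i)) 0 := by
  set d : ℕ → ι → ℤ := fun j i => (x (j + 1) (σ i) : ℤ) - x j i with hd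
  have hA : ∑ i, ∑ a ∈ Icc 1 n, max ((x a (σ i) : ℤ) - x (a - 1) i) 0
      = ∑ j ∈ range (n + 1), ∑ i, max (d j i) 0 := by
    rw [sum_comm, sum_Icc_one_eq_sum_range, sum_range_succ]
    simp [hd, htop]
  have hB : ∑ i, ∑ a ∈ Icc 1 n, max ((x a i : ℤ) - x (a + 1) (σ i)) 0
      = ∑ j ∈ range (n + 1), ∑ i, max (-d j i) 0 := by
    rw [sum_comm, sum_Icc_one_eq_sum_range, sum_range_succ']
    simp [hd, h0]
  have hrow : ∀ j, ∑ i, d j i = ∑ i, (x (j + 1) i : ℤ) - ∑ i, (x j i : ℤ) := fun j => by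
    rw [sum_sub_distrib, Equiv.sum_comp σ fun i => (x (j + 1) i : ℤ)]
  rw [hA, hB, ← sub_eq_zero, ← sum_sub_distrib]
  simp_rw [← sum_sub_distrib, max_zero_sub_max_neg_zero_eq_self, hrow]
  rw [sum_range_sub (fun j => ∑ i, (x j i : ℤ))]
  simp [h0, htop]

/-- For an n-line state x = (x^a_i), a ∈ [1,n], i ∈ ℤ_L
(with conventions x^0 = x^{n+1} = 0), the sets
A_x = {(i,a,k) : 1 ≤ a ≤ n, 1 ≤ k ≤ (x^a_{i+1} - x^{a-1}_i)₊} and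
B_x = {(i,a,k) : 1 ≤ a ≤ n, 1 ≤ k ≤ (x^a_i - x^{a+1}_{i+1})₊}
have the same cardinality. -/
theorem card_A_eq_card_B (n L : ℕ) [NeZero L]
    (x : ℕ → Fin L → ℕ)
    (h0 : ∀ i, x 0 i = 0) (htop : ∀ i, x (n + 1) i = 0) :
    Set.ncard {p : Fin L × ℕ × ℕ |
        1 ≤ p.2.1 ∧ p.2.1 ≤ n ∧ 1 ≤ p.2.2 ∧
        (p.2.2 : ℤ) ≤ max ((x p.2.1 (p.1 + 1) : ℤ) - (x (p.2.1 - 1) p.1 : ℤ)) 0}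
      = Set.ncard {p : Fin L × ℕ × ℕ |
        1 ≤ p.2.1 ∧ p.2.1 ≤ n ∧ 1 ≤ p.2.2 ∧
        (p.2.2 : ℤ) ≤ max ((x p.2.1 p.1 : ℤ) - (x (p.2.1 + 1) (p.1 + 1) : ℤ)) 0} := by
  apply Nat.cast_injective (R := ℤ)
  rw [ncard_setOf_le_max_zero n fun i a => (x a (i + 1) : ℤ) - x (a - 1) i,
    ncard_setOf_le_max_zero n fun i a => (x a i : ℤ) - x (a + 1) (i + 1)]
  exact sum_sum_max_sub_perm_eq (Equiv.addRight 1) n x h0 htop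
end

section
/- The map T : A → B defined in the paper is well-defined: given (x,(i,a,k)) ∈ A (so 1 ≤ k ≤ x^a_{i+1} - x^{a-1}_i), letting c ∈ [a,n] be the unique index such that x^{b-1}_i < x^b_{i+1} for all a ≤ b ≤ c and x^c_i ≥ x^{c+1}_{i+1}, the output (i,c,l), y with y defined by y^b_i = x^b_i + x^b_{i+1} - x^{b-1}_i, y^b_{i+1} = x^{b-1}_i for b ∈ [a+1,c], y^a_i = x^a_i + k, y^a_{i+1} = x^a_{i+1} - k, and l = k if c = a, l = x^c_{i+1} - x^{c-1}_i if c > a, satisfies: all entries of y are nonnegative, each row sum of y equals the corresponding row sum of x, and 1 ≤ l ≤ y^c_i - y^{c+1}_{i+1} (i.e., (i,c,l) ∈ B_y). -/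
/-!
`T` only moves particles between columns `i` and `i + 1` inside a single row, so every row sum
is preserved. The strict chain `x^{b-1}_i < x^b_{i+1}` for `a ≤ b ≤ c` makes the new entries
nonnegative and `l` positive, and the break `x^{c+1}_{i+1} ≤ x^c_i` of the chain is exactly the
bound `l ≤ y^c_i - y^{c+1}_{i+1}`.
-/

open Finset

theorem Fin.add_one_ne_self_of_two_le {L : ℕ} [NeZero L] (hL : 2 ≤ L) (i : Fin L) :
    i + 1 ≠ i := by
  intro h
  have : L = 1 := by simpa [Fin.ext_iff, Fin.val_add] using h
  omega

theorem Finset.sum_eq_sum_of_eq_off_pair {ι M : Type*} [Fintype ι] [DecidableEq ι]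
    [AddCommMonoid M] {f g : ι → M} {p q : ι} (hpq : p ≠ q)
    (hpair : f p + f q = g p + g q) (hoff : ∀ j, j ≠ p → j ≠ q → f j = g j) :
    ∑ j, f j = ∑ j, g j := by
  rw [← sum_add_sum_compl {p, q} f, ← sum_add_sum_compl {p, q} g, sum_pair hpq, sum_pair hpq,
    hpair]
  congr 1
  refine sum_congr rfl fun j hj => ?_
  simp only [mem_compl, mem_insert, mem_singleton, not_or] at hj
  exact hoff j hj.1 hj.2

namespace TMap

variable {L : ℕ} [NeZero L] (x : ℕ → Fin L → ℕ) (i : Fin L) (a k c : ℕ)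

def state (b : ℕ) (j : Fin L) : ℤ :=
  if b = a ∧ j = i then (x a i : ℤ) + k
  else if b = a ∧ j = i + 1 then (x a (i + 1) : ℤ) - k
  else if (a + 1 ≤ b ∧ b ≤ c) ∧ j = i then
    (x b i : ℤ) + (x b (i + 1) : ℤ) - (x (b - 1) i : ℤ)
  else if (a + 1 ≤ b ∧ b ≤ c) ∧ j = i + 1 then (x (b - 1) i : ℤ)
  else (x b j : ℤ)

def label : ℤ :=
  if c = a then (k : ℤ) else (x c (i + 1) : ℤ) - (x (c - 1) i : ℤ)

variable {x i a k c}

theorem state_nonneg (hk : k + x (a - 1) i ≤ x a (i + 1))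
    (hlt : ∀ b, a ≤ b → b ≤ c → x (b - 1) i < x b (i + 1)) (b : ℕ) (j : Fin L) :
    0 ≤ state x i a k c b j := by
  unfold state
  split_ifs with _ _ hmid
  · positivity
  · omega
  · have := hlt b (by omega) hmid.1.2
    omega
  · positivity
  · positivity

theorem sum_state (hi : i + 1 ≠ i) (b : ℕ) :
    ∑ j, state x i a k c b j = ∑ j, (x b j : ℤ) := by
  refine sum_eq_sum_of_eq_off_pair hi.symm ?_ fun j hji hji' => by simp [state, hji, hji']
  simp only [state, hi, hi.symm, and_true, and_false, if_false]
  split_ifs <;> subst_vars <;> ring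

theorem one_le_label (hk : 1 ≤ k) (hlt : x (c - 1) i < x c (i + 1)) :
    1 ≤ label x i a k c := by
  unfold label
  split_ifs <;> omega

theorem label_le (hac : a ≤ c) (hge : x (c + 1) (i + 1) ≤ x c i) :
    label x i a k c ≤ state x i a k c c i - state x i a k c (c + 1) (i + 1) := by
  have hnext : state x i a k c (c + 1) (i + 1) = x (c + 1) (i + 1) := by
    simp [state, show c + 1 ≠ a by omega]
  rw [hnext]
  rcases hac.eq_or_lt with rfl | hlt
  · simp only [label, state, and_self, ↓reduceIte]
    omega
  · simp only [label, state, hlt.ne', false_and, show a + 1 ≤ c by omega, le_refl, and_self,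
      ↓reduceIte]
    omega

end TMap

theorem T_well_defined_general (L : ℕ) [NeZero L] (hL : 2 ≤ L)
    (x : ℕ → Fin L → ℕ)
    (i : Fin L) (a k c : ℕ)
    (hk1 : 1 ≤ k) (hk2 : k + x (a - 1) i ≤ x a (i + 1))
    (hac : a ≤ c)
    (hlt : ∀ b, a ≤ b → b ≤ c → x (b - 1) i < x b (i + 1))
    (hge : x (c + 1) (i + 1) ≤ x c i)
    (y : ℕ → Fin L → ℤ)
    (hy : ∀ b j, y b j =
      if b = a ∧ j = i then (x a i : ℤ) + k
      else if b = a ∧ j = i + 1 then (x a (i + 1) : ℤ) - k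
      else if (a + 1 ≤ b ∧ b ≤ c) ∧ j = i then
        (x b i : ℤ) + (x b (i + 1) : ℤ) - (x (b - 1) i : ℤ)
      else if (a + 1 ≤ b ∧ b ≤ c) ∧ j = i + 1 then (x (b - 1) i : ℤ)
      else (x b j : ℤ))
    (l : ℤ)
    (hl : l = if c = a then (k : ℤ) else (x c (i + 1) : ℤ) - (x (c - 1) i : ℤ)) :
    (∀ b j, 0 ≤ y b j) ∧
    (∀ b, ∑ j, y b j = ∑ j, (x b j : ℤ)) ∧
    (1 ≤ l ∧ l ≤ y c i - y (c + 1) (i + 1)) := by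
  obtain rfl : y = TMap.state x i a k c := funext₂ hy
  obtain rfl : l = TMap.label x i a k c := hl
  have hi := Fin.add_one_ne_self_of_two_le hL i
  exact ⟨TMap.state_nonneg hk2 hlt, TMap.sum_state hi,
    TMap.one_le_label hk1 (hlt c hac le_rfl), TMap.label_le hac hge⟩

/-- Well-definedness of the map T. Given an n-line state x
(conventions x^0 = x^{n+1} = 0), data (i,a,k) ∈ A_x (so 1 ≤ k and
k + x^{a-1}_i ≤ x^a_{i+1}), and the index c ∈ [a,n] with x^{b-1}_i < x^b_{i+1}
for a ≤ b ≤ c and x^c_i ≥ x^{c+1}_{i+1}, the output state y (defined over ℤ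
by the formulas of the paper) has nonnegative entries, the same row sums as x,
and the output label l satisfies 1 ≤ l ≤ y^c_i - y^{c+1}_{i+1}, i.e.
(i,c,l) ∈ B_y. -/
theorem T_well_defined (n L : ℕ) [NeZero L] (hL : 2 ≤ L)
    (x : ℕ → Fin L → ℕ)
    (h0 : ∀ i, x 0 i = 0) (htop : ∀ i, x (n + 1) i = 0)
    (i : Fin L) (a k c : ℕ) (ha1 : 1 ≤ a) (han : a ≤ n)
    (hk1 : 1 ≤ k) (hk2 : k + x (a - 1) i ≤ x a (i + 1))
    (hac : a ≤ c) (hcn : c ≤ n)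
    (hlt : ∀ b, a ≤ b → b ≤ c → x (b - 1) i < x b (i + 1))
    (hge : x (c + 1) (i + 1) ≤ x c i)
    (y : ℕ → Fin L → ℤ)
    (hy : ∀ b j, y b j =
      if b = a ∧ j = i then (x a i : ℤ) + k
      else if b = a ∧ j = i + 1 then (x a (i + 1) : ℤ) - k
      else if (a + 1 ≤ b ∧ b ≤ c) ∧ j = i then
        (x b i : ℤ) + (x b (i + 1) : ℤ) - (x (b - 1) i : ℤ)
      else if (a + 1 ≤ b ∧ b ≤ c) ∧ j = i + 1 then (x (b - 1) i : ℤ)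
      else (x b j : ℤ))
    (l : ℤ)
    (hl : l = if c = a then (k : ℤ) else (x c (i + 1) : ℤ) - (x (c - 1) i : ℤ)) :
    (∀ b j, 0 ≤ y b j) ∧
    (∀ b, ∑ j, y b j = ∑ j, (x b j : ℤ)) ∧
    (1 ≤ l ∧ l ≤ y c i - y (c + 1) (i + 1)) :=
  T_well_defined_general L hL x i a k c hk1 hk2 hac hlt hge y hy l hl
end

section
/- The maps T : A → B and S : B → A defined in the paper are mutually inverse bijections: S ∘ T = id_A and T ∘ S = id_B. -/
/-! Both maps change a state only at the two sites `i` and `i + 1`, which are distinct because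
`L ≥ 2`; there they act line by line by explicit formulas. The cascade of lines moved by `T`
(from `a` up to `c`) is exactly the cascade moved back by `S` (from `c` down to `a`), and on
each line the two formulas undo each other, which is a case analysis in linear arithmetic. -/

/-- The graph of the map T of the paper:
`Trel n x i a k c l y` means T(x,(i,a,k)) = ((i,c,l),y), including the
conditions (i,a,k) ∈ A_x and the defining property of c ∈ [a,n]. -/
def Trel (n : ℕ) {L : ℕ} [NeZero L] (x : ℕ → Fin L → ℕ) (i : Fin L)
    (a k c l : ℕ) (y : ℕ → Fin L → ℕ) : Prop :=
  1 ≤ a ∧ a ≤ n ∧ 1 ≤ k ∧ k + x (a - 1) i ≤ x a (i + 1) ∧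
  a ≤ c ∧ c ≤ n ∧
  (∀ b, a ≤ b → b ≤ c → x (b - 1) i < x b (i + 1)) ∧
  x (c + 1) (i + 1) ≤ x c i ∧
  (∀ b j, y b j =
    if b = a ∧ j = i then x a i + k
    else if b = a ∧ j = i + 1 then x a (i + 1) - k
    else if (a + 1 ≤ b ∧ b ≤ c) ∧ j = i then x b i + x b (i + 1) - x (b - 1) i
    else if (a + 1 ≤ b ∧ b ≤ c) ∧ j = i + 1 then x (b - 1) i
    else x b j) ∧
  l = (if c = a then k else x c (i + 1) - x (c - 1) i)

/-- The graph of the map S of the paper: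
`Srel n x i a k d m y` means S((i,a,k),x) = (y,(i,d,m)), including the
conditions (i,a,k) ∈ B_x and the defining property of d ∈ [1,a]. -/
def Srel (n : ℕ) {L : ℕ} [NeZero L] (x : ℕ → Fin L → ℕ) (i : Fin L)
    (a k d m : ℕ) (y : ℕ → Fin L → ℕ) : Prop :=
  1 ≤ a ∧ a ≤ n ∧ 1 ≤ k ∧ k + x (a + 1) (i + 1) ≤ x a i ∧
  1 ≤ d ∧ d ≤ a ∧
  (∀ b, d ≤ b → b ≤ a → x (b + 1) (i + 1) < x b i) ∧
  x (d - 1) i ≤ x d (i + 1) ∧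
  (∀ b j, y b j =
    if b = a ∧ j = i then x a i - k
    else if b = a ∧ j = i + 1 then x a (i + 1) + k
    else if (d ≤ b ∧ b ≤ a - 1) ∧ j = i then x (b + 1) (i + 1)
    else if (d ≤ b ∧ b ≤ a - 1) ∧ j = i + 1 then x b i + x b (i + 1) - x (b + 1) (i + 1)
    else x b j) ∧
  m = (if d = a then k else x d i - x (d + 1) (i + 1))

theorem Fin.ne_add_one {L : ℕ} [NeZero L] (hL : 2 ≤ L) (i : Fin L) : i ≠ i + 1 := by
  simp only [ne_eq, left_eq_add, Fin.one_eq_zero_iff]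
  omega

namespace Trel

variable {n L : ℕ} [NeZero L] {x y : ℕ → Fin L → ℕ} {i : Fin L} {a k c l : ℕ}

theorem apply_site (hT : Trel n x i a k c l y) (hi : i ≠ i + 1) (b : ℕ) :
    y b i = if b = a then x a i + k
      else if a + 1 ≤ b ∧ b ≤ c then x b i + x b (i + 1) - x (b - 1) i else x b i := by
  obtain ⟨-, -, -, -, -, -, -, -, hy, -⟩ := hT
  simp [hy, hi]

theorem apply_site_succ (hT : Trel n x i a k c l y) (hi : i ≠ i + 1) (b : ℕ) :
    y b (i + 1) = if b = a then x a (i + 1) - k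
      else if a + 1 ≤ b ∧ b ≤ c then x (b - 1) i else x b (i + 1) := by
  obtain ⟨-, -, -, -, -, -, -, -, hy, -⟩ := hT
  simp [hy, hi.symm]

theorem apply_of_ne_site (hT : Trel n x i a k c l y) {j : Fin L} (hji : j ≠ i)
    (hji' : j ≠ i + 1) (b : ℕ) : y b j = x b j := by
  obtain ⟨-, -, -, -, -, -, -, -, hy, -⟩ := hT
  simp [hy, hji, hji']

theorem srel (hT : Trel n x i a k c l y) (hi : i ≠ i + 1) : Srel n y i c l a k x := by
  have hyi := hT.apply_site hi
  have hyi1 := hT.apply_site_succ hi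
  obtain ⟨ha1, han, hk1, hk, hac, hcn, hstrict, hcc, -, hl⟩ := id hT
  refine ⟨by omega, hcn, by grind, by grind, ha1, hac, fun b hab hbc ↦ by grind, by grind,
    fun b j ↦ ?_, by grind⟩
  obtain rfl | hj := eq_or_ne j i
  · grind
  obtain rfl | hj' := eq_or_ne j (i + 1)
  · grind
  · simp [hT.apply_of_ne_site hj hj', hj, hj']

end Trel

namespace Srel

variable {n L : ℕ} [NeZero L] {x y : ℕ → Fin L → ℕ} {i : Fin L} {a k d m : ℕ}

theorem apply_site (hS : Srel n x i a k d m y) (hi : i ≠ i + 1) (b : ℕ) :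
    y b i = if b = a then x a i - k
      else if d ≤ b ∧ b ≤ a - 1 then x (b + 1) (i + 1) else x b i := by
  obtain ⟨-, -, -, -, -, -, -, -, hy, -⟩ := hS
  simp [hy, hi]

theorem apply_site_succ (hS : Srel n x i a k d m y) (hi : i ≠ i + 1) (b : ℕ) :
    y b (i + 1) = if b = a then x a (i + 1) + k
      else if d ≤ b ∧ b ≤ a - 1 then x b i + x b (i + 1) - x (b + 1) (i + 1)
      else x b (i + 1) := by
  obtain ⟨-, -, -, -, -, -, -, -, hy, -⟩ := hS
  simp [hy, hi.symm]

theorem apply_of_ne_site (hS : Srel n x i a k d m y) {j : Fin L} (hji : j ≠ i)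
    (hji' : j ≠ i + 1) (b : ℕ) : y b j = x b j := by
  obtain ⟨-, -, -, -, -, -, -, -, hy, -⟩ := hS
  simp [hy, hji, hji']

theorem trel (hS : Srel n x i a k d m y) (hi : i ≠ i + 1) : Trel n y i d m a k x := by
  have hyi := hS.apply_site hi
  have hyi1 := hS.apply_site_succ hi
  obtain ⟨ha1, han, hk1, hk, hd1, hda, hstrict, hdd, -, hm⟩ := id hS
  refine ⟨hd1, by omega, by grind, by grind, hda, han, fun b hdb hba ↦ by grind, by grind,
    fun b j ↦ ?_, by grind⟩
  obtain rfl | hj := eq_or_ne j i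
  · grind
  obtain rfl | hj' := eq_or_ne j (i + 1)
  · grind
  · simp [hS.apply_of_ne_site hj hj', hj, hj']

end Srel

theorem T_S_mutually_inverse_general (n L : ℕ) [NeZero L] (hL : 2 ≤ L)
    (x y : ℕ → Fin L → ℕ)
    (i : Fin L) :
    (∀ a k c l, Trel n x i a k c l y → Srel n y i c l a k x) ∧
    (∀ a k d m, Srel n x i a k d m y → Trel n y i d m a k x) :=
  ⟨fun _ _ _ _ hT ↦ hT.srel (Fin.ne_add_one hL i),
    fun _ _ _ _ hS ↦ hS.trel (Fin.ne_add_one hL i)⟩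

/-- T : A → B and S : B → A are mutually inverse bijections:
S ∘ T = id_A and T ∘ S = id_B.  Here this is expressed via the graphs of T
and S: if T maps (x,(i,a,k)) to ((i,c,l),y) then S maps ((i,c,l),y) back to
(x,(i,a,k)), and vice versa. -/
theorem T_S_mutually_inverse (n L : ℕ) [NeZero L] (hL : 2 ≤ L)
    (x y : ℕ → Fin L → ℕ)
    (h0 : ∀ i, x 0 i = 0) (htop : ∀ i, x (n + 1) i = 0)
    (i : Fin L) :
    (∀ a k c l, Trel n x i a k c l y → Srel n y i c l a k x) ∧
    (∀ a k d m, Srel n x i a k d m y → Trel n y i d m a k x) :=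
  T_S_mutually_inverse_general n L hL x y i
end

section
/- For a Markov process on a finite state space in which from state x there is a transition to T^k_{i,a}(x) at rate 1 for each (i,a,k) ∈ A_x, the uniform distribution is stationary; i.e., for every state x, the total inflow rate under the uniform measure equals the total outflow rate #A_x · μ. This follows from the existence of a bijection between {(y,(i,a,k)) : T^k_{i,a}(y) = x} and B_x, combined with #A_x = #B_x. -/
open Finset

theorem card_subtype_sigma_eq_sum_card_filter {V ι : Type*} [Fintype V] (A : V → Finset ι)
    (P : V → ι → Prop) [∀ y, DecidablePred (P y)] :
    Fintype.card {z : (y : V) × {p // p ∈ A y} // P z.1 z.2.1} =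
      ∑ y, #((A y).filter (P y)) := by
  simp only [Fintype.card_subtype, card_filter, Fintype.sum_sigma]
  exact Fintype.sum_congr _ _ fun y => sum_coe_sort (A y) fun p => if P y p then 1 else 0

theorem uniform_stationary_general {V ι : Type*} [Fintype V] [DecidableEq V]
    (A B : V → Finset ι) (t : V → ι → V)
    (hcard : ∀ x, (A x).card = (B x).card)
    (e : ((y : V) × {p // p ∈ A y}) ≃ ((x : V) × {p // p ∈ B x}))
    (he : ∀ z : (y : V) × {p // p ∈ A y}, t z.1 z.2.1 = (e z).1) :
    ∀ x : V, ∑ y : V, ((A y).filter (fun p => t y p = x)).card = (A x).card := by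
  intro x
  calc ∑ y, #((A y).filter (fun p => t y p = x))
      = Fintype.card {z : (y : V) × {p // p ∈ A y} // t z.1 z.2.1 = x} :=
        (card_subtype_sigma_eq_sum_card_filter A fun y p => t y p = x).symm
    _ = Fintype.card {w : (x' : V) × {p // p ∈ B x'} // w.1 = x} :=
        Fintype.card_congr (e.subtypeEquiv fun z => by rw [he z])
    _ = #(B x) := by rw [Fintype.card_congr (Equiv.sigmaSubtype x), Fintype.card_coe]
    _ = #(A x) := (hcard x).symm

/-- For a Markov process on a finite state space V in which from
state y there is a transition to t y p at rate 1 for each p ∈ A y, the uniform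
distribution is stationary: for every state x the total inflow
#{(y,p) : p ∈ A y, t y p = x} equals the total outflow #A_x.  This holds given
a bijection e from ⊔_y {y} × A_y to ⊔_x B_x × {x} whose target state component
realizes the transition map, together with #A_x = #B_x for all x. -/
theorem uniform_stationary {V ι : Type*} [Fintype V] [DecidableEq V] [DecidableEq ι]
    (A B : V → Finset ι) (t : V → ι → V)
    (hcard : ∀ x, (A x).card = (B x).card)
    (e : ((y : V) × {p // p ∈ A y}) ≃ ((x : V) × {p // p ∈ B x}))
    (he : ∀ z : (y : V) × {p // p ∈ A y}, t z.1 z.2.1 = (e z).1) :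
    ∀ x : V, ∑ y : V, ((A y).filter (fun p => t y p = x)).card = (A x).card :=
  uniform_stationary_general A B t hcard e he
end

section
/- For a,b,c,i,j,k ∈ ℤ_{≥0}, the matrix element ⟨c| δ_{a+b,i+j} θ(a ≥ j) (a⁺)^j k^{θ(a>j)} (a⁻)^b |k⟩ equals δ_{a, j+(i-k)_+} · δ_{b, min(i,k)} · δ_{c, j+(k-i)_+}, where a⁺, a⁻, k are the q=0 oscillators, θ(P) = 1 if P is true and 0 otherwise, and (x)_+ = max(x,0). -/
/-! On basis vectors every oscillator word acts as a partial shift: `(a⁺)^j k^n (a⁻)^b |m⟩` is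
`|m - b + j⟩` if `b ≤ m` and either `n = 0` or `m = b` (so that `k` sees `|0⟩`), and `0` otherwise.
The matrix element is therefore the indicator of a system of linear constraints on natural numbers,
and that system is equivalent to the three Kronecker deltas. -/

noncomputable def aPlus : Module.End ℂ (ℕ →₀ ℂ) :=
  Finsupp.lsum ℂ fun m => Finsupp.lsingle (m + 1)

noncomputable def aMinus : Module.End ℂ (ℕ →₀ ℂ) :=
  Finsupp.lsum ℂ fun m => if m = 0 then 0 else Finsupp.lsingle (m - 1)

noncomputable def kOsc : Module.End ℂ (ℕ →₀ ℂ) :=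
  Finsupp.lsum ℂ fun m => if m = 0 then Finsupp.lsingle 0 else 0

open Finsupp

theorem aPlus_single (m : ℕ) (r : ℂ) : aPlus (single m r) = single (m + 1) r :=
  lsum_single ..

theorem aMinus_single (m : ℕ) (r : ℂ) :
    aMinus (single m r) = if m = 0 then 0 else single (m - 1) r := by
  rw [aMinus, lsum_single]
  split_ifs <;> rfl

theorem kOsc_single (m : ℕ) (r : ℂ) :
    kOsc (single m r) = if m = 0 then single m r else 0 := by
  rw [kOsc, lsum_single]
  split_ifs with h
  · rw [h]; rfl
  · rfl

theorem aPlus_pow_single (j m : ℕ) (r : ℂ) :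
    (aPlus ^ j) (single m r) = single (m + j) r := by
  induction j with
  | zero => rfl
  | succ j ih => rw [pow_succ', Module.End.mul_apply, ih, aPlus_single, add_assoc]

theorem aMinus_pow_single (b m : ℕ) (r : ℂ) :
    (aMinus ^ b) (single m r) = if b ≤ m then single (m - b) r else 0 := by
  induction b with
  | zero => simp
  | succ b ih =>
    rw [pow_succ', Module.End.mul_apply, ih]
    by_cases hb : b ≤ m
    · rw [if_pos hb, aMinus_single]
      by_cases hm : m - b = 0
      · rw [if_pos hm, if_neg (by omega)]
      · rw [if_neg hm, if_pos (by omega), Nat.sub_sub]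
    · rw [if_neg hb, if_neg (by omega), map_zero]

theorem kOsc_pow_single (n m : ℕ) (r : ℂ) :
    (kOsc ^ n) (single m r) = if n = 0 ∨ m = 0 then single m r else 0 := by
  induction n with
  | zero => simp
  | succ n ih =>
    rw [pow_succ', Module.End.mul_apply, ih]
    by_cases hm : m = 0 <;> by_cases hn : n = 0 <;> simp [hm, hn, kOsc_single]

theorem aPlus_pow_mul_kOsc_pow_mul_aMinus_pow_single (j n b m : ℕ) (r : ℂ) :
    (aPlus ^ j * kOsc ^ n * aMinus ^ b) (single m r) =
      if b ≤ m ∧ (n = 0 ∨ m = b) then single (m - b + j) r else 0 := by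
  rw [Module.End.mul_apply, Module.End.mul_apply, aMinus_pow_single]
  by_cases hb : b ≤ m
  · rw [if_pos hb, kOsc_pow_single]
    by_cases hn : n = 0 ∨ m - b = 0
    · rw [if_pos hn, if_pos (by omega), aPlus_pow_single]
    · rw [if_neg hn, if_neg (by omega), map_zero]
  · rw [if_neg hb, if_neg (by omega), map_zero, map_zero]

theorem q0_R_selection_rule (a b c i j k : ℕ) :
    (a + b = i + j ∧ j ≤ a ∧ (b ≤ k ∧ (¬j < a ∨ k = b)) ∧ k - b + j = c) ↔
      a = j + (i - k) ∧ b = min i k ∧ c = j + (k - i) := by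
  omega

/-- For a,b,c,i,j,k ∈ ℤ_{≥0},
⟨c| δ_{a+b,i+j} θ(a ≥ j) (a⁺)^j k^{θ(a>j)} (a⁻)^b |k⟩
  = δ_{a, j+(i-k)₊} δ_{b, min(i,k)} δ_{c, j+(k-i)₊}.
(For natural numbers, truncated subtraction i - k equals (i-k)₊.) -/
theorem q0_R_matrix_element (a b c i j k : ℕ) :
    ((if a + b = i + j then (1 : ℂ) else 0) •
      ((if j ≤ a then (1 : ℂ) else 0) •
        ((aPlus ^ j * kOsc ^ (if j < a then 1 else 0) * aMinus ^ b)
          (Finsupp.single k 1)))) c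
    = if a = j + (i - k) ∧ b = min i k ∧ c = j + (k - i) then 1 else 0 := by
  rw [aPlus_pow_mul_kOsc_pow_mul_aMinus_pow_single]
  simp only [Finsupp.smul_apply, smul_eq_mul, apply_ite (fun f : ℕ →₀ ℂ => f c), single_apply,
    coe_zero, Pi.zero_apply, ite_zero_mul_ite_zero, mul_one, ← ite_and, ite_eq_right_iff,
    one_ne_zero, imp_false, q0_R_selection_rule]
end

section
/- Fix L ≥ 1 and nonnegative integers i₁,...,i_L, j₁,...,j_L with Σ_r i_r > Σ_r j_r. Then the system of equations c_{r-1} = j_r + (c_r - i_r)_+ for r ∈ [1,L], together with the cyclic condition c₀ = c_L, has a unique solution (c₁,...,c_L) ∈ (ℤ_{≥0})^L. -/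
/-!
Reading the system backwards from `c 0`, a solution is the orbit of `c 0` under the maps
`x ↦ j r + (x - i r)`, and it closes up exactly when `c 0` is a fixed point of their composite.
Maps of the form `x ↦ q + (x - p)`, translations by `q - p` clamped from below, are closed under
composition with additive net translation, so the composite is `x ↦ q + (x - p)` with
`q - p = ∑ j - ∑ i < 0`, whose only fixed point is `q`.
-/

open Finset Function Fin.NatCast

namespace UniqueCyclic

section CyclicSystem

variable {α : Type*} {L : ℕ} [NeZero L] (g : Fin L → α → α)

/-- `backOrbit g x k = c (-k)` for the solution `c` of `c (r - 1) = g r (c r)` with `c 0 = x`. -/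
def backOrbit (x : α) : ℕ → α
  | 0 => x
  | k + 1 => g (-k) (backOrbit x k)

theorem backOrbit_eq_of_solution {c : Fin L → α} (hc : ∀ r, c (r - 1) = g r (c r)) (k : ℕ) :
    backOrbit g (c 0) k = c (-k) := by
  induction k with
  | zero => simp [backOrbit]
  | succ k ih =>
    rw [backOrbit, ih, ← hc]
    congr 1
    push_cast
    abel

theorem backOrbit_periodic {x : α} (hx : backOrbit g x L = x) : Periodic (backOrbit g x) L := by
  intro k
  induction k with
  | zero => simpa [backOrbit] using hx
  | succ k ih => rw [add_right_comm, backOrbit, backOrbit, ih, Nat.cast_add, Fin.natCast_self, add_zero]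

theorem backOrbit_solution {x : α} (hx : backOrbit g x L = x) (r : Fin L) :
    backOrbit g x (-(r - 1)).val = g r (backOrbit g x (-r).val) := by
  have hval : (-(r - 1)).val = ((-r).val + 1) % L := by
    rw [neg_sub', sub_neg_eq_add, Fin.val_add, Fin.val_one', Nat.add_mod_mod]
  rw [hval, (backOrbit_periodic g hx).map_mod_nat, backOrbit, Fin.cast_val_eq_self, neg_neg]

theorem existsUnique_cyclic_solution_iff :
    (∃! c : Fin L → α, ∀ r, c (r - 1) = g r (c r)) ↔ ∃! x, backOrbit g x L = x := by
  have fixed {c : Fin L → α} (hc : ∀ r, c (r - 1) = g r (c r)) : backOrbit g (c 0) L = c 0 := by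
    rw [backOrbit_eq_of_solution g hc, Fin.natCast_self, neg_zero]
  constructor
  · rintro ⟨c, hc, huniq⟩
    refine ⟨c 0, fixed hc, fun x hx => ?_⟩
    simpa [backOrbit] using congrFun (huniq (fun s => backOrbit g x (-s).val) (backOrbit_solution g hx)) 0
  · rintro ⟨x, hx, huniq⟩
    refine ⟨fun s => backOrbit g x (-s).val, backOrbit_solution g hx, fun c hc => funext fun s => ?_⟩
    rw [← huniq _ (fixed hc), backOrbit_eq_of_solution g hc, Fin.cast_val_eq_self, neg_neg]

end CyclicSystem

theorem sum_range_neg {M : Type*} [AddCommMonoid M] {L : ℕ} [NeZero L] (f : Fin L → M) :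
    ∑ m ∈ range L, f (-m) = ∑ r, f r := by
  rw [← Fin.sum_univ_eq_sum_range (fun m => f (-m))]
  simp only [Fin.cast_val_eq_self]
  exact Equiv.sum_comp (Equiv.neg _) f

def IsClampedShift (φ : ℕ → ℕ) (a b : ℕ) : Prop :=
  ∃ p q, q + a = p + b ∧ ∀ x, φ x = q + (x - p)

namespace IsClampedShift

theorem of_sub (a b : ℕ) : IsClampedShift (fun x => b + (x - a)) a b :=
  ⟨a, b, add_comm _ _, fun _ => rfl⟩

theorem id : IsClampedShift id 0 0 :=
  ⟨0, 0, rfl, fun x => by simp⟩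

theorem comp {φ ψ : ℕ → ℕ} {a b a' b' : ℕ} (hψ : IsClampedShift ψ a' b')
    (hφ : IsClampedShift φ a b) : IsClampedShift (ψ ∘ φ) (a + a') (b + b') := by
  obtain ⟨p, q, hpq, hφ⟩ := hφ
  obtain ⟨p', q', hpq', hψ⟩ := hψ
  refine ⟨p + (p' - q), q' + (q - p'), by omega, fun x => ?_⟩
  simp only [comp_apply, hφ, hψ]
  omega

theorem existsUnique_fixedPoint {φ : ℕ → ℕ} {a b : ℕ} (hφ : IsClampedShift φ a b) (hba : b < a) :
    ∃! x, φ x = x := by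
  obtain ⟨p, q, hpq, hφ⟩ := hφ
  refine ⟨q, ?_, fun x hx => ?_⟩ <;> simp only [hφ] at * <;> omega

end IsClampedShift

theorem isClampedShift_backOrbit {L : ℕ} [NeZero L] (i j : Fin L → ℕ) (k : ℕ) :
    IsClampedShift (fun x => backOrbit (fun r x => j r + (x - i r)) x k)
      (∑ m ∈ range k, i (-m)) (∑ m ∈ range k, j (-m)) := by
  induction k with
  | zero => exact IsClampedShift.id
  | succ k ih =>
    rw [sum_range_succ, sum_range_succ]
    exact (IsClampedShift.of_sub _ _).comp ih

end UniqueCyclic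

open UniqueCyclic in
/-- For L ≥ 1 and nonnegative integers i_r, j_r with
Σ i_r > Σ j_r, the cyclic system c_{r-1} = j_r + (c_r - i_r)₊, r ∈ ℤ_L,
has a unique solution in nonnegative integers.  (Indices are cyclic, modeled
by Fin L; truncated ℕ-subtraction realizes the positive part.) -/
theorem unique_cyclic_solution (L : ℕ) [NeZero L] (i j : Fin L → ℕ)
    (h : ∑ r, j r < ∑ r, i r) :
    ∃! c : Fin L → ℕ, ∀ r : Fin L, c (r - 1) = j r + (c r - i r) := by
  refine (existsUnique_cyclic_solution_iff (fun r x => j r + (x - i r))).2 ?_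
  have hshift := isClampedShift_backOrbit i j L
  rw [sum_range_neg, sum_range_neg] at hshift
  exact hshift.existsUnique_fixedPoint h
end
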